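/- arXiv:1701.02618 — 2 statements merged into one kernel-verified Lean document; each statement's English description precedes it below -/
import Mathlib

section
/- Let U = ∑_{ν∈G} u(ν)·ν^{−1} with u(ν) ∈ ℤ_{(p)} satisfy ∑_{ν∈G} u(ν)·α_p(η)^{ν^{−1}} ≡ 0 (mod p·Z_{K,(p)}), let 𝔭 | p be the prime of L associated with the irreducible p-adic character θ, and suppose U_φ := e_φ·U ≢ 0 (mod 𝔭) for some (equivalently, every) φ | θ. Then Δ_p^θ(η) ≡ 0 (mod 𝔭^f), i.e. the image of the local θ-regulator Δ_p^θ(η) in L_𝔭 = ℚ_p is divisible by p^f. -/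
open NumberField

noncomputable section

/-- `x` is a `p`-integer of `K`, i.e. `x` lies in the localization `Z_{K,(p)}` of the
ring of integers of `K` away from `p` (denominators prime to `p`). -/
def IsPInt (K : Type*) [Field K] [NumberField K] (p : ℕ) (x : K) : Prop :=
  ∃ (a : 𝓞 K) (d : ℤ), ¬ (p : ℤ) ∣ d ∧ (d : K) * x = (a : K)

/-- `x ∈ I · Z_{K,(p)}`, for an ideal `I` of the ring of integers of `K`. -/
def MemPIdeal (K : Type*) [Field K] [NumberField K] (p : ℕ) (I : Ideal (𝓞 K)) (x : K) : Prop :=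
  ∃ (a : 𝓞 K) (d : ℤ), ¬ (p : ℤ) ∣ d ∧ a ∈ I ∧ (d : K) * x = (a : K)

/-- `x ∈ K^×` is prime to `p` : it is a unit at every place of `K` above `p`. -/
def PrimeToP (K : Type*) [Field K] [NumberField K] (p : ℕ) (x : K) : Prop :=
  IsPInt K p x ∧ IsPInt K p x⁻¹

/-- the prime `p` is unramified in `K`. -/
def UnramifiedIn (K : Type*) [Field K] [NumberField K] (p : ℕ) : Prop :=
  ∀ P : Ideal (𝓞 K), P.IsPrime → (p : 𝓞 K) ∈ P →
    Ideal.ramificationIdx' (Ideal.span {(p : ℤ)}) P = 1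

/-- `np` is the common residue degree of the primes of `K` above `p`. -/
def ResidueDeg (K : Type*) [Field K] [NumberField K] (p np : ℕ) : Prop :=
  ∀ P : Ideal (𝓞 K), P.IsPrime → (p : 𝓞 K) ∈ P →
    Ideal.inertiaDeg' (Ideal.span {(p : ℤ)}) P = np

/-- a rational number is a `p`-integer, i.e. lies in `ℤ_(p)`. -/
def RatIsPInt (p : ℕ) (q : ℚ) : Prop :=
  ∃ a d : ℤ, ¬ (p : ℤ) ∣ d ∧ (d : ℚ) * q = (a : ℚ)

/-- the generalized Fermat quotient `α_p(x) = (x^{p^{n_p}-1} - 1)/p`. -/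
def alphaP (K : Type*) [Field K] [NumberField K] (p np : ℕ) (x : K) : K :=
  (x ^ (p ^ np - 1) - 1) / p

/-- The matrix representation `ρ` of `G = Gal(K/ℚ)` with coefficients in `M` is absolutely
irreducible (Burnside criterion: its image generates the full matrix algebra). -/
def AbsIrred (K M : Type*) [Field K] [NumberField K] [Field M] [NumberField M]
    (m : ℕ) (ρ : (K ≃ₐ[ℚ] K) →* Matrix (Fin m) (Fin m) M) : Prop :=
  Algebra.adjoin M (Set.range fun g : K ≃ₐ[ℚ] K => ρ g) = ⊤

/-- `D` is the decomposition group of the prime `P` of `M`: the set of automorphisms of `M`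
stabilizing `P`. -/
def IsDecompGroup (M : Type*) [Field M] [NumberField M]
    (P : Ideal (𝓞 M)) (D : Finset (M ≃ₐ[ℚ] M)) : Prop :=
  ∀ s : M ≃ₐ[ℚ] M, s ∈ D ↔
    ∀ a : 𝓞 M, a ∈ P → ∀ b : 𝓞 M, (b : M) = s (a : M) → b ∈ P

/-- Coefficient at `ν` of the `φ`-component `U_φ = e_φ·U` of `U = ∑_ν u(ν)·ν⁻¹` with rational
coefficients: `u_φ(ν) = (φ(1)/n)·∑_{τ∈G} φ(τ⁻¹)·u(ντ)`, where `φ = tr ∘ ρ`. -/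
def eCompQ (K M : Type*) [Field K] [NumberField K] [Field M] [NumberField M]
    (m : ℕ) (ρ : (K ≃ₐ[ℚ] K) →* Matrix (Fin m) (Fin m) M)
    (u : (K ≃ₐ[ℚ] K) → ℚ) (ν : K ≃ₐ[ℚ] K) : M :=
  ((m : M) / (Fintype.card (K ≃ₐ[ℚ] K) : M)) *
    ∑ τ : K ≃ₐ[ℚ] K, Matrix.trace (ρ τ⁻¹) * (u (ν * τ) : M)

/-- Coefficient at `ν` of the `φ`-component `W_φ = e_φ·W` of `W = ∑_ν w(ν)·ν⁻¹` with
coefficients in `M`. -/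
def eCompM (K M : Type*) [Field K] [NumberField K] [Field M] [NumberField M]
    (m : ℕ) (ρ : (K ≃ₐ[ℚ] K) →* Matrix (Fin m) (Fin m) M)
    (w : (K ≃ₐ[ℚ] K) → M) (ν : K ≃ₐ[ℚ] K) : M :=
  ((m : M) / (Fintype.card (K ≃ₐ[ℚ] K) : M)) *
    ∑ τ : K ≃ₐ[ℚ] K, Matrix.trace (ρ τ⁻¹) * w (ν * τ)

/-- The local `θ`-regulator `Δ_p^θ(α) = ∏_{φ'∣θ} P^{φ'}(…, α^ν, …)`, where the absolutely
irreducible constituents `φ' = φ^s` of `θ` are indexed by the decomposition group `D` and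
`P^{φ^s}(…, α^ν, …) = det(∑_ν α^ν · ρ^s(ν⁻¹))`. -/
def DeltaTheta (K M : Type*) [Field K] [NumberField K] [Field M] [NumberField M]
    [Algebra K M] (m : ℕ) (ρ : (K ≃ₐ[ℚ] K) →* Matrix (Fin m) (Fin m) M)
    (D : Finset (M ≃ₐ[ℚ] M)) (α : K) : M :=
  ∏ s ∈ D, Matrix.det (∑ ν : K ≃ₐ[ℚ] K, algebraMap K M (ν α) • (ρ ν⁻¹).map s)

/-!
Conjugate `ρ` into a representation `ρ_A` over the semilocal principal ideal domain
`A = Z_{M,(p)}`, and let `𝔓 = 𝔭 A`. For `s ∈ D` the factor `P^{φ^s}(…, α^ν, …)` of `Δ_p^θ` is `s`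
applied to the group determinant `det ρ_A(C)` of `C = ∑_ν s⁻¹(α^ν) ν⁻¹`. The congruence
`U · α ≡ 0 (mod p)` makes every coefficient of `U · C` vanish mod `𝔓`, so `ρ_A(U) ρ_A(C) ≡ 0`.
If `det ρ_A(C) ∉ 𝔓`, then `ρ_A(C)` is invertible mod `𝔓`, hence `ρ_A(U) ≡ 0`, and the traces
`tr(ρ_A(U) ρ_A(ν))` are the coefficients of `U_φ` up to the unit `φ(1)/|G|`: this contradicts
`U_φ ≢ 0 (mod 𝔭)`. As `s` fixes `𝔭`, each of the `|D|` factors lies in `𝔭`.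
-/

section GroupRing

variable {R A G : Type*} [CommSemiring R] [Semiring A] [Algebra R A] [Group G] [Fintype G]

theorem sum_smul_inv_mul_sum_smul_inv (ρ : G →* A) (a b : G → R) :
    (∑ g, a g • ρ g⁻¹) * (∑ g, b g • ρ g⁻¹) = ∑ σ, (∑ τ, a τ * b (σ * τ⁻¹)) • ρ σ⁻¹ := by
  simp_rw [Finset.sum_mul, Finset.mul_sum, smul_mul_smul_comm, Finset.sum_smul]
  conv_rhs => rw [Finset.sum_comm]
  refine Finset.sum_congr rfl fun τ _ => Fintype.sum_equiv (Equiv.mulRight τ) _ _ fun ν => ?_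
  simp

end GroupRing

section PrimeIdeal

variable {R : Type*} [CommRing R] {n : Type*} [Fintype n] {I : Ideal R}

theorem Matrix.mem_of_mul_mem_of_det_notMem [DecidableEq n] [I.IsPrime] {A B : Matrix n n R}
    (hBA : ∀ i j, (B * A) i j ∈ I) (hA : A.det ∉ I) (i j : n) : B i j ∈ I := by
  have h : (B * A * A.adjugate) i j = A.det * B i j := by
    rw [Matrix.mul_assoc, Matrix.mul_adjugate, Matrix.mul_smul, Matrix.mul_one,
      Matrix.smul_apply, smul_eq_mul]
  have : A.det * B i j ∈ I := h ▸ Ideal.sum_mem _ fun k _ => I.mul_mem_right _ (hBA i k)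
  exact (Ideal.IsPrime.mem_or_mem ‹_› this).resolve_left hA

theorem Matrix.trace_mul_mem {B : Matrix n n R} (hB : ∀ i j, B i j ∈ I) (X : Matrix n n R) :
    (B * X).trace ∈ I :=
  Ideal.sum_mem _ fun i _ => Ideal.sum_mem _ fun k _ => I.mul_mem_right _ (hB i k)

variable {G : Type*} [Group G] [Fintype G] [DecidableEq n]

theorem trace_sum_smul_inv_mul (ρ : G →* Matrix n n R) (u : G → R) (ν : G) :
    ((∑ τ, u τ • ρ τ⁻¹) * ρ ν).trace = ∑ τ, (ρ τ⁻¹).trace * u (ν * τ) := by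
  simp_rw [Finset.sum_mul, smul_mul_assoc, ← map_mul, Matrix.trace_sum, Matrix.trace_smul,
    smul_eq_mul]
  refine Fintype.sum_equiv (Equiv.mulLeft ν⁻¹) _ _ fun τ => ?_
  simp [mul_comm]

/-- `hrel` says `U * C ≡ 0 (mod I)` in the group ring, for `U = ∑ u(τ) τ⁻¹` and
`C = ∑ c(ν) ν⁻¹`. -/
theorem det_sum_smul_inv_mem [I.IsPrime] (ρ : G →* Matrix n n R) (u c : G → R)
    (hrel : ∀ σ, ∑ τ, u τ * c (σ * τ⁻¹) ∈ I) (hu : ∃ ν, ∑ τ, (ρ τ⁻¹).trace * u (ν * τ) ∉ I) :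
    (∑ ν, c ν • ρ ν⁻¹).det ∈ I := by
  obtain ⟨ν, hν⟩ := hu
  by_contra hdet
  refine hν (trace_sum_smul_inv_mul ρ u ν ▸ Matrix.trace_mul_mem (fun i j => ?_) _)
  refine Matrix.mem_of_mul_mem_of_det_notMem (fun i j => ?_) hdet i j
  rw [sum_smul_inv_mul_sum_smul_inv, Matrix.sum_apply]
  exact Ideal.sum_mem _ fun σ _ => by
    rw [Matrix.smul_apply, smul_eq_mul]; exact I.mul_mem_right _ (hrel σ)

end PrimeIdeal

section IntegralModel

variable {R F : Type*} [CommRing R] [IsDomain R] [IsPrincipalIdealRing R] [Field F] [Algebra R F]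
  [IsFractionRing R F] {n : Type*} [Fintype n] [DecidableEq n]

theorem Submodule.exists_basis_coe_eq_basis (L : Submodule R (n → F)) [Module.Finite R L]
    (hL : ∀ i, Pi.single i 1 ∈ L) :
    ∃ (b : Module.Basis n R L) (bF : Module.Basis n F (n → F)), ∀ i, bF i = b i := by
  let b₀ := Module.Free.chooseBasis R L
  have hli : LinearIndependent F fun i => (b₀ i : n → F) :=
    (LinearIndependent.iff_fractionRing R F).1 (b₀.linearIndependent.map' L.subtype L.ker_subtype)
  have hspan : ⊤ ≤ Submodule.span F (Set.range fun i => (b₀ i : n → F)) := by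
    have hw : ∀ w : L, (w : n → F) ∈ Submodule.span F (Set.range fun i => (b₀ i : n → F)) := by
      intro w
      rw [← b₀.sum_repr w]
      push_cast
      exact Submodule.sum_mem _ fun i _ =>
        Submodule.smul_of_tower_mem _ _ (Submodule.subset_span ⟨i, rfl⟩)
    rw [← (Pi.basisFun F n).span_eq, Submodule.span_le]
    rintro _ ⟨i, rfl⟩
    simpa using hw ⟨_, hL i⟩
  let bF₀ := Module.Basis.mk hli hspan
  let e := bF₀.indexEquiv (Pi.basisFun F n)
  exact ⟨b₀.reindex e, bF₀.reindex e, fun i => by simp [bF₀]⟩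

variable {G : Type*} [Monoid G] [Finite G]

/-- The `R`-lattice spanned by the `G`-orbits of the standard basis vectors is `G`-stable and
free. -/
theorem exists_units_conj_eq_map_algebraMap (ρ : G →* Matrix n n F) :
    ∃ (T : (Matrix n n F)ˣ) (ρR : G →* Matrix n n R),
      ∀ g, ρ g = T.val * (ρR g).map (algebraMap R F) * T⁻¹.val := by
  let L : Submodule R (n → F) :=
    Submodule.span R (Set.range fun x : G × n => (ρ x.1).mulVec (Pi.single x.2 1))
  have hstab : ∀ g, L ≤ L.comap ((ρ g).mulVecLin.restrictScalars R) := fun g =>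
    Submodule.span_le.2 <| Set.range_subset_iff.2 fun x =>
      Submodule.subset_span ⟨(g * x.1, x.2), by simp only [map_mul, ← Matrix.mulVec_mulVec]; rfl⟩
  let ρL : G →* Module.End R L :=
    { toFun := fun g => ((ρ g).mulVecLin.restrictScalars R).restrict (hstab g)
      map_one' := by ext; simp
      map_mul' := fun g h => by ext; simp [Matrix.mulVec_mulVec] }
  have : Module.Finite R L := Module.Finite.span_of_finite R (Set.finite_range _)
  obtain ⟨b, bF, hbF⟩ := L.exists_basis_coe_eq_basis fun i =>
    Submodule.subset_span ⟨(1, i), by simp only [map_one, Matrix.one_mulVec]⟩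
  have hrepr : ∀ (w : L) i, bF.repr w i = algebraMap R F (b.repr w i) := by
    intro w i
    have : (w : n → F) = ∑ k, algebraMap R F (b.repr w k) • bF k := by
      conv_lhs => rw [← b.sum_repr w]
      push_cast
      simp only [hbF, algebraMap_smul]
    rw [this, bF.repr_sum_self]
  refine ⟨⟨(Pi.basisFun F n).toMatrix bF, bF.toMatrix (Pi.basisFun F n),
    Module.Basis.toMatrix_mul_toMatrix_flip _ _, Module.Basis.toMatrix_mul_toMatrix_flip _ _⟩,
    (LinearMap.toMatrixAlgEquiv b).toRingEquiv.toMonoidHom.comp ρL, fun g => ?_⟩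
  have hmat : LinearMap.toMatrix bF bF (ρ g).mulVecLin =
      (LinearMap.toMatrix b b (ρL g)).map (algebraMap R F) := by
    ext i j
    rw [LinearMap.toMatrix_apply, Matrix.map_apply, LinearMap.toMatrix_apply, ← hrepr, hbF]
    rfl
  have := basis_toMatrix_mul_linearMap_toMatrix_mul_basis_toMatrix (Pi.basisFun F n) bF
    (Pi.basisFun F n) bF (ρ g).mulVecLin
  rw [LinearMap.toMatrix_eq_toMatrix', show LinearMap.toMatrix' (ρ g).mulVecLin = ρ g from
    LinearMap.toMatrix'_toLin' _, hmat] at this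
  exact this.symm

end IntegralModel

theorem IsDecompGroup.memPIdeal_apply {F : Type*} [Field F] [NumberField F] {p : ℕ}
    {P : Ideal (𝓞 F)} {D : Finset (F ≃ₐ[ℚ] F)} (hD : IsDecompGroup F P D) {s : F ≃ₐ[ℚ] F}
    (hs : s ∈ D) {x : F} (hx : MemPIdeal F p P x) : MemPIdeal F p P (s x) := by
  obtain ⟨a, d, hd, ha, h⟩ := hx
  exact ⟨RingOfIntegers.mapRingEquiv s.toRingEquiv a, d, hd, (hD s).1 hs a ha _ rfl,
    by simp [← h]⟩

section PIntegers

variable (p : ℕ) [hp : Fact p.Prime] (F : Type*) [Field F]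

instance : (Ideal.span {(p : ℤ)}).IsPrime := (Int.ideal_span_isMaximal_of_prime p).isPrime

abbrev pDenominators : Submonoid (𝓞 F) :=
  Algebra.algebraMapSubmonoid (𝓞 F) (Ideal.span {(p : ℤ)}).primeCompl

theorem mem_pDenominators_iff {s : 𝓞 F} :
    s ∈ pDenominators p F ↔ ∃ d : ℤ, ¬ (p : ℤ) ∣ d ∧ (d : 𝓞 F) = s := by
  simp [Algebra.algebraMapSubmonoid, Ideal.mem_span_singleton]

variable [NumberField F]

theorem pDenominators_le_nonZeroDivisors : pDenominators p F ≤ nonZeroDivisors (𝓞 F) :=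
  map_le_nonZeroDivisors_of_injective _ (FaithfulSMul.algebraMap_injective _ _)
    (Ideal.span {(p : ℤ)}).primeCompl_le_nonZeroDivisors

/-- The ring `Z_{F,(p)}` of `p`-integers of `F`. -/
def pIntegers : Subalgebra (𝓞 F) F :=
  Localization.subalgebra.ofField F _ (pDenominators_le_nonZeroDivisors p F)

instance : IsLocalization (pDenominators p F) (pIntegers p F) :=
  Localization.subalgebra.isLocalization_ofField F _ _

instance : IsDedekindDomain (pIntegers p F) :=
  IsLocalization.isDedekindDomain (𝓞 F) (pDenominators_le_nonZeroDivisors p F) _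

instance : IsPrincipalIdealRing (pIntegers p F) :=
  IsDedekindDomain.isPrincipalIdealRing_localization_over_prime (𝓞 F) (Ideal.span {(p : ℤ)})
    (by simpa using hp.out.ne_zero) (Sₚ := pIntegers p F)

variable {p F}

theorem mem_pIntegers_iff {x : F} : x ∈ pIntegers p F ↔ IsPInt F p x := by
  change (∃ (a s : 𝓞 F) (_ : s ∈ pDenominators p F), x = a * (s : F)⁻¹) ↔ _
  simp only [mem_pDenominators_iff p F, exists_prop]
  constructor
  · rintro ⟨a, _, ⟨d, hd, rfl⟩, rfl⟩
    have : (d : F) ≠ 0 := Int.cast_ne_zero.2 fun h => hd (h ▸ dvd_zero _)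
    exact ⟨a, d, hd, by simp only [map_intCast]; field_simp⟩
  · rintro ⟨a, d, hd, h⟩
    have : (d : F) ≠ 0 := Int.cast_ne_zero.2 fun h => hd (h ▸ dvd_zero _)
    exact ⟨a, d, ⟨d, hd, rfl⟩, by simp only [map_intCast, ← h]; field_simp⟩

theorem RingHom.map_mem_pIntegers {F' : Type*} [Field F'] [NumberField F'] (f : F →+* F')
    {x : F} (hx : x ∈ pIntegers p F) : f x ∈ pIntegers p F' := by
  obtain ⟨a, d, hd, h⟩ := mem_pIntegers_iff.1 hx
  exact mem_pIntegers_iff.2 ⟨RingOfIntegers.mapRingHom f a, d, hd, by simp [← h]⟩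

theorem natCast_inv_mem_pIntegers {n : ℕ} (hn : ¬ p ∣ n) : (n : F)⁻¹ ∈ pIntegers p F := by
  have : (n : F) ≠ 0 := Nat.cast_ne_zero.2 fun h => hn (h ▸ dvd_zero _)
  exact mem_pIntegers_iff.2 ⟨1, n, by exact_mod_cast hn, by simp [this]⟩

theorem ratCast_mem_pIntegers {q : ℚ} (hq : RatIsPInt p q) : (q : F) ∈ pIntegers p F := by
  obtain ⟨a, d, hd, h⟩ := hq
  exact mem_pIntegers_iff.2 ⟨a, d, hd, by simpa using congrArg (Rat.cast : ℚ → F) h⟩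

theorem memPIdeal_iff_exists {I : Ideal (𝓞 F)} {x : F} :
    MemPIdeal F p I x ↔ ∃ y ∈ I.map (algebraMap (𝓞 F) (pIntegers p F)), (y : F) = x := by
  constructor
  · rintro ⟨a, d, hd, ha, h⟩
    refine ⟨⟨x, mem_pIntegers_iff.2 ⟨a, d, hd, h⟩⟩,
      (IsLocalization.mem_map_algebraMap_iff (pDenominators p F) _).2
        ⟨(⟨a, ha⟩, ⟨d, (mem_pDenominators_iff p F).2 ⟨d, hd, rfl⟩⟩), Subtype.ext ?_⟩, rfl⟩
    simp [← h, mul_comm]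
  · rintro ⟨y, hy, rfl⟩
    obtain ⟨⟨⟨a, ha⟩, ⟨s, hs⟩⟩, h⟩ :=
      (IsLocalization.mem_map_algebraMap_iff (pDenominators p F) _).1 hy
    obtain ⟨d, hd, rfl⟩ := (mem_pDenominators_iff p F).1 hs
    exact ⟨a, d, hd, ha, by simpa [mul_comm] using congrArg Subtype.val h⟩

theorem MemPIdeal.mul {I J : Ideal (𝓞 F)} {x y : F} (hx : MemPIdeal F p I x)
    (hy : MemPIdeal F p J y) : MemPIdeal F p (I * J) (x * y) := by
  obtain ⟨x', hx', rfl⟩ := memPIdeal_iff_exists.1 hx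
  obtain ⟨y', hy', rfl⟩ := memPIdeal_iff_exists.1 hy
  exact memPIdeal_iff_exists.2
    ⟨x' * y', by rw [Ideal.map_mul]; exact Ideal.mul_mem_mul hx' hy', rfl⟩

theorem MemPIdeal.prod {I : Ideal (𝓞 F)} {ι : Type*} (t : Finset ι) {f : ι → F}
    (h : ∀ i ∈ t, MemPIdeal F p I (f i)) : MemPIdeal F p (I ^ t.card) (∏ i ∈ t, f i) := by
  classical
  induction t using Finset.induction_on with
  | empty => exact memPIdeal_iff_exists.2 ⟨1, by simp [Ideal.map_top], by simp⟩
  | insert a t ha ih =>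
    rw [Finset.prod_insert ha, Finset.card_insert_of_notMem ha, pow_succ']
    exact (h a (t.mem_insert_self a)).mul (ih fun i hi => h i (Finset.mem_insert_of_mem hi))

theorem isPrime_map_pIntegers {P : Ideal (𝓞 F)} [P.IsPrime] (hpP : (p : 𝓞 F) ∈ P) :
    (P.map (algebraMap (𝓞 F) (pIntegers p F))).IsPrime := by
  refine IsLocalization.isPrime_of_isPrime_disjoint (pDenominators p F) _ P ‹_›
    (Ideal.disjoint_map_primeCompl_iff_comap_le.2 ?_).symm
  refine ((Int.ideal_span_isMaximal_of_prime p).eq_of_le (Ideal.IsPrime.comap _).ne_top ?_).ge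
  simpa [Ideal.span_le] using hpP

theorem natCast_mem_map_pIntegers {P : Ideal (𝓞 F)} (hpP : (p : 𝓞 F) ∈ P) :
    (p : pIntegers p F) ∈ P.map (algebraMap (𝓞 F) (pIntegers p F)) := by
  simpa using Ideal.mem_map_of_mem (algebraMap (𝓞 F) (pIntegers p F)) hpP

theorem sum_mul_inv_apply_div_mem {u : (F ≃ₐ[ℚ] F) → ℚ} (hu : ∀ ν, RatIsPInt p (u ν)) {x y : F}
    (hxy : (x - y) / p ∈ pIntegers p F) (hy : (∑ ν, (u ν : F) * ν⁻¹ y) / p ∈ pIntegers p F) :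
    (∑ ν, (u ν : F) * ν⁻¹ x) / p ∈ pIntegers p F := by
  have hp0 : (p : F) ≠ 0 := Nat.cast_ne_zero.2 hp.out.ne_zero
  have : (∑ ν, (u ν : F) * ν⁻¹ x) / p =
      ∑ ν, (u ν : F) * ν⁻¹ ((x - y) / p) + (∑ ν, (u ν : F) * ν⁻¹ y) / p := by
    simp only [map_div₀, map_sub, map_natCast, Finset.sum_div, ← Finset.sum_add_distrib]
    refine Finset.sum_congr rfl fun ν _ => ?_
    field_simp
    ring
  rw [this]
  exact add_mem (sum_mem fun ν _ =>
    mul_mem (ratCast_mem_pIntegers (hu ν)) ((ν⁻¹ : F ≃ₐ[ℚ] F).toRingHom.map_mem_pIntegers hxy)) hy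

end PIntegers

section Representation

variable {K M : Type*} [Field K] [NumberField K] [Field M] [NumberField M] {m : ℕ}
  {ρ : (K ≃ₐ[ℚ] K) →* Matrix (Fin m) (Fin m) M} {T : (Matrix (Fin m) (Fin m) M)ˣ}

section
variable {A : Type*} [CommRing A] [Algebra A M] {ρA : (K ≃ₐ[ℚ] K) →* Matrix (Fin m) (Fin m) A}

theorem eCompQ_eq_of_conj (hρ : ∀ g, ρ g = T.val * (ρA g).map (algebraMap A M) * T⁻¹.val)
    (u : (K ≃ₐ[ℚ] K) → ℚ) (uA : (K ≃ₐ[ℚ] K) → A) (huA : ∀ τ, algebraMap A M (uA τ) = u τ)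
    (ν : K ≃ₐ[ℚ] K) :
    eCompQ K M m ρ u ν = (m / Fintype.card (K ≃ₐ[ℚ] K) : M) *
      algebraMap A M (∑ τ, (ρA τ⁻¹).trace * uA (ν * τ)) := by
  simp only [eCompQ, hρ, Matrix.trace_units_conj, map_sum, map_mul, huA,
    AddMonoidHom.map_trace (algebraMap A M)]

theorem det_sum_smul_map_of_conj
    (hρ : ∀ g, ρ g = T.val * (ρA g).map (algebraMap A M) * T⁻¹.val) (s : M ≃ₐ[ℚ] M)
    (a : (K ≃ₐ[ℚ] K) → M) (c : (K ≃ₐ[ℚ] K) → A) (hc : ∀ ν, s (algebraMap A M (c ν)) = a ν) :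
    (∑ ν, a ν • (ρ ν⁻¹).map s).det = s (algebraMap A M (∑ ν, c ν • ρA ν⁻¹).det) := by
  have h1 : ∑ ν, a ν • (ρ ν⁻¹).map s =
      (s : M →+* M).mapMatrix (∑ ν, algebraMap A M (c ν) • ρ ν⁻¹) := by
    simp only [map_sum, RingHom.mapMatrix_apply, ← hc]
    exact Finset.sum_congr rfl fun ν _ => (Matrix.map_smul' _ _ _ (map_mul s)).symm
  have h2 : ∑ ν, algebraMap A M (c ν) • ρ ν⁻¹ =
      T.val * (algebraMap A M).mapMatrix (∑ ν, c ν • ρA ν⁻¹) * T⁻¹.val := by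
    simp only [hρ, map_sum, Finset.mul_sum, Finset.sum_mul, RingHom.mapMatrix_apply]
    exact Finset.sum_congr rfl fun ν _ => by
      rw [Matrix.map_smul' _ _ _ (map_mul _), Matrix.mul_smul, Matrix.smul_mul]
  rw [h1, ← RingHom.map_det, h2, Matrix.det_units_conj, ← RingHom.map_det]
  rfl

end

variable {p : ℕ} [Fact p.Prime] {P : Ideal (𝓞 M)}
  {ρA : (K ≃ₐ[ℚ] K) →* Matrix (Fin m) (Fin m) (pIntegers p M)}

theorem memPIdeal_eCompQ_of_conj (hpn : ¬ p ∣ Fintype.card (K ≃ₐ[ℚ] K))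
    (hρ : ∀ g, ρ g = T.val * (ρA g).map (algebraMap (pIntegers p M) M) * T⁻¹.val)
    (u : (K ≃ₐ[ℚ] K) → ℚ) (uA : (K ≃ₐ[ℚ] K) → pIntegers p M) (huA : ∀ τ, (uA τ : M) = u τ)
    (h : ∀ ν, ∑ τ, (ρA τ⁻¹).trace * uA (ν * τ) ∈ P.map (algebraMap (𝓞 M) (pIntegers p M)))
    (ν : K ≃ₐ[ℚ] K) : MemPIdeal M p P (eCompQ K M m ρ u ν) := by
  rw [eCompQ_eq_of_conj hρ u uA huA, div_eq_mul_inv]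
  exact memPIdeal_iff_exists.2 ⟨_, Ideal.mul_mem_left _
    ⟨_, mul_mem (natCast_mem _ m) (natCast_inv_mem_pIntegers hpn)⟩ (h ν), rfl⟩

/-- `∑_τ u(τ) c(στ⁻¹)` is `(f ∘ σ)(U · α)`, and `U · α ∈ p Z_{K,(p)}`. -/
theorem sum_mul_mem_map_pIntegers [Algebra K M] (hpP : (p : 𝓞 M) ∈ P) {u : (K ≃ₐ[ℚ] K) → ℚ}
    {α : K} (hα : (∑ τ, (u τ : K) * τ⁻¹ α) / p ∈ pIntegers p K) (f : K →+* M)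
    (uA c : (K ≃ₐ[ℚ] K) → pIntegers p M) (huA : ∀ τ, (uA τ : M) = u τ)
    (hc : ∀ ν, (c ν : M) = f (ν α)) (σ : K ≃ₐ[ℚ] K) :
    ∑ τ, uA τ * c (σ * τ⁻¹) ∈ P.map (algebraMap (𝓞 M) (pIntegers p M)) := by
  have : ∑ τ, uA τ * c (σ * τ⁻¹) = p * ⟨_, (f.comp σ).map_mem_pIntegers hα⟩ := by
    apply Subtype.ext
    have hp0 : (p : M) ≠ 0 := Nat.cast_ne_zero.2 (Fact.out : p.Prime).ne_zero
    simp only [AddSubmonoidClass.coe_finsetSum, MulMemClass.coe_mul, huA, hc, AlgEquiv.mul_apply,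
      AlgEquiv.coe_inv, map_div₀, map_sum, RingHom.coe_comp, RingHom.coe_coe, Function.comp_apply,
      map_mul, map_ratCast, map_natCast, SubringClass.coe_natCast]
    field_simp
  rw [this]
  exact Ideal.mul_mem_right _ _ (natCast_mem_map_pIntegers hpP)

end Representation

theorem statement9_general (K M : Type*) [Field K] [NumberField K]
    [Field M] [NumberField M] [Algebra K M]
    (m : ℕ) (ρ : (K ≃ₐ[ℚ] K) →* Matrix (Fin m) (Fin m) M)
    (p : ℕ) (hp : p.Prime) (hpn : ¬ p ∣ Fintype.card (K ≃ₐ[ℚ] K))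
    (η : K) (np : ℕ)
    (α : 𝓞 K) (hα : IsPInt K p (((α : K) - alphaP K p np η) / p))
    (u : (K ≃ₐ[ℚ] K) → ℚ) (hu : ∀ ν, RatIsPInt p (u ν))
    (hrel : IsPInt K p ((∑ ν : K ≃ₐ[ℚ] K, (u ν : K) * ν⁻¹ (alphaP K p np η)) / p))
    (P : Ideal (𝓞 M)) (hP : P.IsPrime) (hPp : (p : 𝓞 M) ∈ P)
    (D : Finset (M ≃ₐ[ℚ] M)) (hD : IsDecompGroup M P D)
    (hUφ : ¬ ∀ ν, MemPIdeal M p P (eCompQ K M m ρ u ν)) :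
    MemPIdeal M p (P ^ D.card) (DeltaTheta K M m ρ D (α : K)) := by
  have := Fact.mk hp
  have := isPrime_map_pIntegers (F := M) (P := P) hPp
  obtain ⟨T, ρA, hρ⟩ := exists_units_conj_eq_map_algebraMap (R := pIntegers p M) ρ
  have hUα := sum_mul_inv_apply_div_mem hu (mem_pIntegers_iff.2 hα) (mem_pIntegers_iff.2 hrel)
  let uA : (K ≃ₐ[ℚ] K) → pIntegers p M := fun τ => ⟨u τ, ratCast_mem_pIntegers (hu τ)⟩
  have hUA : ∃ ν, ∑ τ, (ρA τ⁻¹).trace * uA (ν * τ) ∉ P.map (algebraMap _ (pIntegers p M)) := by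
    contrapose! hUφ
    exact memPIdeal_eCompQ_of_conj hpn hρ u uA (fun _ => rfl) hUφ
  refine MemPIdeal.prod D fun s hs => ?_
  let f : K →+* M := ((s⁻¹ : M ≃ₐ[ℚ] M) : M →+* M).comp (algebraMap K M)
  let c : (K ≃ₐ[ℚ] K) → pIntegers p M := fun ν =>
    ⟨f (ν α), (f.comp ν).map_mem_pIntegers (Subalgebra.algebraMap_mem _ α)⟩
  rw [det_sum_smul_map_of_conj hρ s _ c fun ν => by simp [c, f]]
  exact hD.memPIdeal_apply hs (memPIdeal_iff_exists.2 ⟨_, det_sum_smul_inv_mem ρA uA c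
    (sum_mul_mem_map_pIntegers hPp hUα f uA c (fun _ => rfl) fun _ => rfl) hUA, rfl⟩)

/-- Corollary 3.6. Let `U = ∑_ν u(ν)·ν⁻¹`, `u(ν) ∈ ℤ_(p)`, satisfy
`∑_ν u(ν)·α_p(η)^{ν⁻¹} ≡ 0 (mod p·Z_{K,(p)})`, let `𝔭 ∣ p` be the prime associated with the
irreducible `p`-adic character `θ` (with decomposition group `D`, `f := |D|`), and suppose
`U_φ = e_φ·U ≢ 0 (mod 𝔭)`. Then `Δ_p^θ(η) ≡ 0 (mod 𝔭^f)`, i.e. the local `θ`-regulator is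
divisible by `p^f`. -/
theorem statement9 (K M : Type*) [Field K] [NumberField K] [IsGalois ℚ K]
    [Field M] [NumberField M] [IsGalois ℚ M] [Algebra K M]
    (m : ℕ) (ρ : (K ≃ₐ[ℚ] K) →* Matrix (Fin m) (Fin m) M)
    (hirr : AbsIrred K M m ρ)
    (p : ℕ) (hp : p.Prime) (hp2 : 2 < p) (hpn : ¬ p ∣ Fintype.card (K ≃ₐ[ℚ] K))
    (hurK : UnramifiedIn K p) (hurM : UnramifiedIn M p)
    (η : K) (hη : η ≠ 0) (hpr : PrimeToP K p η) (np : ℕ) (hnp : ResidueDeg K p np)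
    (α : 𝓞 K) (hα : IsPInt K p (((α : K) - alphaP K p np η) / p))
    (u : (K ≃ₐ[ℚ] K) → ℚ) (hu : ∀ ν, RatIsPInt p (u ν))
    (hrel : IsPInt K p ((∑ ν : K ≃ₐ[ℚ] K, (u ν : K) * ν⁻¹ (alphaP K p np η)) / p))
    (P : Ideal (𝓞 M)) (hP : P.IsPrime) (hPp : (p : 𝓞 M) ∈ P)
    (D : Finset (M ≃ₐ[ℚ] M)) (hD : IsDecompGroup M P D)
    (hUφ : ¬ ∀ ν, MemPIdeal M p P (eCompQ K M m ρ u ν)) :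
    MemPIdeal M p (P ^ D.card) (DeltaTheta K M m ρ D (α : K)) :=
  statement9_general K M m ρ p hp hpn η np α hα u hu hrel P hP hPp D hD hUφ
end
end

section
/- Let η ∈ Z_K be nonzero and not a root of unity, and c_0(η) := max_{σ∈G} |η^σ| > 1. Fix a ℤ-basis (e_i)_{i=1,…,n} of Z_K, let (Γ_i^σ) be the inverse of the matrix (e_i^σ)_{i,σ}, and set Γ(K) := max_{i=1,…,n} ∑_{σ∈G} |Γ_i^σ|. Then Γ(K) ≥ 1, and for every prime p and every integer j with 1 ≤ j ≤ (log(p−1) − log(2·Γ(K)))/log(c_0(η)), the coordinates A_{j,i} ∈ ℤ of η^j = ∑_{i=1}^n A_{j,i}·e_i satisfy |A_{j,i}| < p/2 for all i; in particular the residue [η^j]_p of η^j coincides with η^j. -/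
open NumberField

noncomputable section

/-- `c₀(η) = max_{σ∈G} |η^σ|` under a fixed embedding `ι : K → ℂ`. -/
def houseC (K : Type*) [Field K] [NumberField K] (ι : K →+* ℂ) (x : K) : ℝ :=
  ⨆ σ : K ≃ₐ[ℚ] K, ‖ι (σ x)‖

/-- `Γ(K) := max_i ∑_σ |Γ_i^σ|`, for the inverse matrix `(Γ_i^σ)` of `(e_i^σ)_{i,σ}`. -/
def GammaK (K : Type*) [Field K] [NumberField K] (I : Type*) [Fintype I]
    (Γm : Matrix (K ≃ₐ[ℚ] K) I ℂ) : ℝ :=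
  ⨆ i : I, ∑ σ : K ≃ₐ[ℚ] K, ‖Γm σ i‖

/-!
Write `A_i(x)` for the coordinates of `x ∈ Z_K` on the basis `(e_i)`. Applying the conjugations to
`x = ∑ A_i(x) e_i` and multiplying by the inverse matrix gives `A_i(x) = ∑_σ x^σ Γ_i^σ`, hence
`|A_i(x)| ≤ c₀(x) Γ(K)`. For `x = 1` some coordinate is a nonzero integer, so `Γ(K) ≥ 1`; for
`x = η^j` the bound is at most `c₀(η)^j Γ(K) ≤ (p - 1)/2` in the stated range of `j`. Finally
`c₀(η) > 1` is Kronecker's theorem, since in a Galois field every complex embedding is `ι ∘ σ`. -/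

theorem Module.Basis.repr_eq_sum_mul_of_mul_eq_one {M S I J : Type*} [AddCommGroup M] [Ring S]
    [Fintype I] [DecidableEq I] [Fintype J] (b : Module.Basis I ℤ M) (f : J → M →+ S)
    (Γm : Matrix J I S) (hΓ : (Matrix.of fun i σ => f σ (b i)) * Γm = 1) (x : M) (i : I) :
    ((b.repr x i : ℤ) : S) = ∑ σ, f σ x * Γm σ i := by
  have hcoord : Matrix.vecMul (fun i => ((b.repr x i : ℤ) : S)) (Matrix.of fun i σ => f σ (b i))
      = fun σ => f σ x := by
    funext σ
    conv_rhs => rw [← b.sum_repr x]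
    rw [map_sum]
    exact Finset.sum_congr rfl fun j _ => by rw [map_zsmul, zsmul_eq_mul]; rfl
  have := congrFun (congrArg (Matrix.vecMul · Γm) hcoord) i
  rw [Matrix.vecMul_vecMul, hΓ, Matrix.vecMul_one] at this
  simpa [Matrix.vecMul, dotProduct] using this

section Galois

variable {K : Type*} [Field K] [NumberField K]

theorem norm_le_houseC (ι : K →+* ℂ) (x : K) (σ : K ≃ₐ[ℚ] K) : ‖ι (σ x)‖ ≤ houseC K ι x :=
  le_ciSup (f := fun σ : K ≃ₐ[ℚ] K => ‖ι (σ x)‖) (Set.finite_range _).bddAbove σ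

theorem houseC_one (ι : K →+* ℂ) : houseC K ι 1 = 1 := by
  simp [houseC]

theorem houseC_pow_le (ι : K →+* ℂ) (x : K) (j : ℕ) : houseC K ι (x ^ j) ≤ houseC K ι x ^ j :=
  ciSup_le fun σ => by
    rw [map_pow, map_pow, norm_pow]
    exact pow_le_pow_left₀ (norm_nonneg _) (norm_le_houseC ι x σ) j

theorem sum_norm_le_gammaK {I : Type*} [Fintype I] (Γm : Matrix (K ≃ₐ[ℚ] K) I ℂ) (i : I) :
    ∑ σ, ‖Γm σ i‖ ≤ GammaK K I Γm :=
  le_ciSup (f := fun i => ∑ σ, ‖Γm σ i‖) (Set.finite_range _).bddAbove i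

theorem abs_repr_le_houseC_mul_gammaK (ι : K →+* ℂ) {I : Type*} [Fintype I] [DecidableEq I]
    (b : Module.Basis I ℤ (𝓞 K)) (Γm : Matrix (K ≃ₐ[ℚ] K) I ℂ)
    (hΓ : (Matrix.of fun i (σ : K ≃ₐ[ℚ] K) => ι (σ (b i : K))) * Γm = 1) (x : 𝓞 K) (i : I) :
    |((b.repr x i : ℤ) : ℝ)| ≤ houseC K ι x * GammaK K I Γm := by
  let f : (K ≃ₐ[ℚ] K) → 𝓞 K →+ ℂ := fun σ =>
    (ι.comp ((σ : K →+* K).comp (algebraMap (𝓞 K) K))).toAddMonoidHom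
  calc |((b.repr x i : ℤ) : ℝ)| = ‖∑ σ, f σ x * Γm σ i‖ := by
        rw [← b.repr_eq_sum_mul_of_mul_eq_one f Γm hΓ, Complex.norm_intCast]
    _ ≤ ∑ σ, houseC K ι x * ‖Γm σ i‖ := by
        refine (norm_sum_le _ _).trans (Finset.sum_le_sum fun σ _ => ?_)
        rw [norm_mul]
        exact mul_le_mul_of_nonneg_right (norm_le_houseC ι x σ) (norm_nonneg _)
    _ ≤ houseC K ι x * GammaK K I Γm := by
        rw [← Finset.mul_sum]
        exact mul_le_mul_of_nonneg_left (sum_norm_le_gammaK Γm i)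
          ((norm_nonneg _).trans (norm_le_houseC ι x 1))

theorem one_le_gammaK (ι : K →+* ℂ) {I : Type*} [Fintype I] [DecidableEq I]
    (b : Module.Basis I ℤ (𝓞 K)) (Γm : Matrix (K ≃ₐ[ℚ] K) I ℂ)
    (hΓ : (Matrix.of fun i (σ : K ≃ₐ[ℚ] K) => ι (σ (b i : K))) * Γm = 1) :
    1 ≤ GammaK K I Γm := by
  obtain ⟨i, hi⟩ : ∃ i, b.repr 1 i ≠ 0 := by
    by_contra! h
    exact one_ne_zero (b.repr.injective (by ext i; simp [h i]))
  calc (1 : ℝ) ≤ |((b.repr 1 i : ℤ) : ℝ)| := by exact_mod_cast Int.one_le_abs hi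
    _ ≤ GammaK K I Γm := by
        simpa [houseC_one] using abs_repr_le_houseC_mul_gammaK ι b Γm hΓ 1 i

theorem exists_comp_algEquiv_eq [IsGalois ℚ K] (ι φ : K →+* ℂ) :
    ∃ σ : K ≃ₐ[ℚ] K, ∀ x, φ x = ι (σ x) := by
  obtain ⟨σ, hσ⟩ := NumberField.ComplexEmbedding.exists_comp_symm_eq_of_comp_eq (k := ℚ) ι φ
    (by ext; simp)
  exact ⟨σ.symm, fun x => by rw [← hσ]; rfl⟩

theorem one_lt_houseC [IsGalois ℚ K] (ι : K →+* ℂ) {η : 𝓞 K} (hη0 : η ≠ 0)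
    (hnr : ¬ ∃ k : ℕ, 0 < k ∧ η ^ k = 1) : 1 < houseC K ι η := by
  by_contra! hle
  have hconj : ∀ φ : K →+* ℂ, ‖φ η‖ ≤ 1 := fun φ => by
    obtain ⟨σ, hσ⟩ := exists_comp_algEquiv_eq ι φ
    exact hσ η ▸ (norm_le_houseC ι _ σ).trans hle
  obtain ⟨k, hk, hηk⟩ := NumberField.Embeddings.pow_eq_one_of_norm_le_one K ℂ
    (by simpa using hη0) η.isIntegral_coe hconj
  exact hnr ⟨k, hk, RingOfIntegers.coe_injective (by simpa using hηk)⟩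

end Galois

theorem pow_le_of_natCast_le_log_div_log {c y : ℝ} {j : ℕ} (hc : 1 < c) (hy : 0 < y)
    (h : (j : ℝ) ≤ Real.log y / Real.log c) : c ^ j ≤ y :=
  (Real.pow_le_iff_le_log (by linarith) hy).mpr ((le_div_iff₀ (Real.log_pos hc)).mp h)

theorem statement16_general (K : Type*) [Field K] [NumberField K] [IsGalois ℚ K]
    (ιC : K →+* ℂ) (I : Type*) [Fintype I] [DecidableEq I] (b : Module.Basis I ℤ (𝓞 K))
    (Γm : Matrix (K ≃ₐ[ℚ] K) I ℂ)
    (hΓ1 : (Matrix.of fun (i : I) (σ : K ≃ₐ[ℚ] K) => ιC (σ ((b i : K)))) * Γm = 1)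
    (η : 𝓞 K) (hη0 : η ≠ 0) (hnr : ¬ ∃ k : ℕ, 0 < k ∧ η ^ k = 1) :
    1 ≤ GammaK K I Γm ∧ 1 < houseC K ιC (η : K) ∧
    ∀ p : ℕ, p.Prime → ∀ j : ℕ, 1 ≤ j →
      (j : ℝ) ≤ (Real.log ((p : ℝ) - 1) - Real.log (2 * GammaK K I Γm)) /
        Real.log (houseC K ιC (η : K)) →
      ∀ i : I, |((b.repr (η ^ j) i : ℤ) : ℝ)| < (p : ℝ) / 2 := by
  have hΓ := one_le_gammaK ιC b Γm hΓ1
  have hc := one_lt_houseC ιC hη0 hnr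
  refine ⟨hΓ, hc, fun p hp j _ hj i => ?_⟩
  have hp2 : (2 : ℝ) ≤ p := by exact_mod_cast hp.two_le
  have hcj : houseC K ιC η ^ j ≤ ((p : ℝ) - 1) / (2 * GammaK K I Γm) :=
    pow_le_of_natCast_le_log_div_log hc (by apply div_pos <;> linarith)
      (by rwa [Real.log_div (by linarith) (by linarith)])
  calc |((b.repr (η ^ j) i : ℤ) : ℝ)|
      ≤ houseC K ιC (η ^ j : 𝓞 K) * GammaK K I Γm := abs_repr_le_houseC_mul_gammaK ιC b Γm hΓ1 _ i
    _ ≤ ((p : ℝ) - 1) / (2 * GammaK K I Γm) * GammaK K I Γm := by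
        gcongr
        push_cast
        exact (houseC_pow_le ιC _ j).trans hcj
    _ < p / 2 := by
        rw [div_mul_eq_mul_div, mul_div_mul_right _ _ (by linarith)]
        linarith

/-- Lemma 6.5. Let `η ∈ Z_K` be nonzero, not a root of unity, and
`c₀(η) = max_σ |η^σ| > 1`. Fix a `ℤ`-basis `(e_i)` of `Z_K`, let `(Γ_i^σ)` be the inverse of
the matrix `(e_i^σ)_{i,σ}` and `Γ(K) := max_i ∑_σ |Γ_i^σ|`. Then `Γ(K) ≥ 1` and for every
prime `p` and every `1 ≤ j ≤ (log(p−1) − log(2Γ(K)))/log(c₀(η))`, the integer coordinates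
`A_{j,i}` of `η^j` on the basis satisfy `|A_{j,i}| < p/2` for all `i`; in particular the
residue `[η^j]_p` coincides with `η^j`. -/
theorem statement16 (K : Type*) [Field K] [NumberField K] [IsGalois ℚ K]
    [DecidableEq (K ≃ₐ[ℚ] K)]
    (ιC : K →+* ℂ) (I : Type*) [Fintype I] [DecidableEq I] (b : Module.Basis I ℤ (𝓞 K))
    (Γm : Matrix (K ≃ₐ[ℚ] K) I ℂ)
    (hΓ1 : (Matrix.of fun (i : I) (σ : K ≃ₐ[ℚ] K) => ιC (σ ((b i : K)))) * Γm = 1)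
    (hΓ2 : Γm * (Matrix.of fun (i : I) (σ : K ≃ₐ[ℚ] K) => ιC (σ ((b i : K)))) = 1)
    (η : 𝓞 K) (hη0 : η ≠ 0) (hnr : ¬ ∃ k : ℕ, 0 < k ∧ η ^ k = 1) :
    1 ≤ GammaK K I Γm ∧ 1 < houseC K ιC (η : K) ∧
    ∀ p : ℕ, p.Prime → ∀ j : ℕ, 1 ≤ j →
      (j : ℝ) ≤ (Real.log ((p : ℝ) - 1) - Real.log (2 * GammaK K I Γm)) /
        Real.log (houseC K ιC (η : K)) →
      ∀ i : I, |((b.repr (η ^ j) i : ℤ) : ℝ)| < (p : ℝ) / 2 :=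
  statement16_general K ιC I b Γm hΓ1 η hη0 hnr
end
end
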